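/- arXiv:1608.01973 — 2 statements merged into one kernel-verified Lean document; each statement's English description precedes it below -/
import Mathlib

section
/- If G is a disconnected graph that is minor minimal incompletely apex, then G is the disjoint union of K_1 with either K_5 or K_{3,3}. -/
open SimpleGraph

def K5 : SimpleGraph (Fin 5) := ⊤

def K33 : SimpleGraph (Fin 3 ⊕ Fin 3) := completeBipartiteGraph (Fin 3) (Fin 3)

/-- `H` is a minor of `G`: branch-set (model) definition. -/
def IsMinor {W V : Type} (H : SimpleGraph W) (G : SimpleGraph V) : Prop :=
  ∃ f : W → Set V,
    (∀ w, (f w).Nonempty) ∧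
    (∀ w, (G.induce (f w)).Connected) ∧
    (Pairwise fun w₁ w₂ => Disjoint (f w₁) (f w₂)) ∧
    (∀ w₁ w₂, H.Adj w₁ w₂ → ∃ x ∈ f w₁, ∃ y ∈ f w₂, G.Adj x y)

/-- Planarity, via Wagner's theorem: no `K₅` minor and no `K₃,₃` minor. -/
def Planar {V : Type} (G : SimpleGraph V) : Prop :=
  ¬ IsMinor K5 G ∧ ¬ IsMinor K33 G

def ProperMinor {W V : Type} (H : SimpleGraph W) (G : SimpleGraph V) : Prop :=
  IsMinor H G ∧ ¬ IsMinor G H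

def MinorMinimal (P : {V : Type} → SimpleGraph V → Prop) {V : Type} (G : SimpleGraph V) : Prop :=
  P G ∧ ∀ (W : Type) (H : SimpleGraph W), ProperMinor H G → ¬ P H

/-- `G` together with the extra edge `uv`. -/
def AddEdge {V : Type} (G : SimpleGraph V) (u v : V) : SimpleGraph V :=
  G ⊔ fromEdgeSet {s(u, v)}

/-- `G - v`. -/
def DeleteVert {V : Type} (G : SimpleGraph V) (v : V) :=
  G.induce {u | u ≠ v}

/-- Disjoint union of graphs. -/
def DisjUnion {α β : Type} (G : SimpleGraph α) (H : SimpleGraph β) : SimpleGraph (α ⊕ β) :=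
  (G.map Sum.inl) ⊔ (H.map Sum.inr)

/-- `K₂ ∪̇ G`: a `K₂` glued to `G` at the vertex `v` (a pendant vertex). -/
def Pendant {V : Type} (G : SimpleGraph V) (v : V) : SimpleGraph (Option V) :=
  (G.map some) ⊔ fromEdgeSet {s(none, some v)}

/-- The result of subdividing the edge `uv` of `G`, the new vertex being `none`. -/
def SubdivideEdge {V : Type} (G : SimpleGraph V) (u v : V) : SimpleGraph (Option V) :=
  ((G.deleteEdges {s(u, v)}).map some) ⊔
    fromEdgeSet {s(none, some u), s(none, some v)}

/-- The contraction `G/uv` (realized on the same vertex set: `v` is absorbed into `u`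
and left as an isolated vertex, which does not affect planarity). -/
def ContractEdge {V : Type} (G : SimpleGraph V) (u v : V) : SimpleGraph V where
  Adj a b := a ≠ b ∧ ∃ x y, G.Adj x y ∧
    ((x = v ∧ a = u) ∨ (x ≠ v ∧ a = x)) ∧ ((y = v ∧ b = u) ∨ (y ≠ v ∧ b = y))
  symm := ⟨by
    rintro a b ⟨hab, x, y, hxy, hx, hy⟩
    exact ⟨hab.symm, y, x, hxy.symm, hy, hx⟩⟩
  loopless := ⟨by rintro a ⟨h, -⟩; exact h rfl⟩

/-- `κ(G) ≥ k`: more than `k` vertices and no cut set of fewer than `k` vertices. -/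
def VertexConnAtLeast {V : Type} [Fintype V] (G : SimpleGraph V) (k : ℕ) : Prop :=
  k < Fintype.card V ∧
    ∀ U : Finset V, U.card < k → (G.induce ((↑U : Set V)ᶜ)).Connected

def K5e : SimpleGraph (Fin 5) := K5.deleteEdges {s(0, 1)}

def K33e : SimpleGraph (Fin 3 ⊕ Fin 3) := K33.deleteEdges {s(Sum.inl 0, Sum.inr 0)}

def K2 : SimpleGraph (Fin 2) := ⊤

/-- A planar graph is maximally planar (equivalently, a plane triangulation)
if adding any edge between nonadjacent vertices destroys planarity. -/
def MaximalPlanar {V : Type} (G : SimpleGraph V) : Prop :=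
  Planar G ∧ ∀ u v : V, u ≠ v → ¬ G.Adj u v → ¬ Planar (AddEdge G u v)

/-- Almost nonplanar. -/
def AN {V : Type} (G : SimpleGraph V) : Prop :=
  Planar G ∧ ∃ u v : V, u ≠ v ∧ ¬ G.Adj u v ∧ ¬ Planar (AddEdge G u v)

/-- Completely almost nonplanar. -/
def CAN {V : Type} (G : SimpleGraph V) : Prop :=
  Planar G ∧ (∃ u v : V, u ≠ v ∧ ¬ G.Adj u v) ∧
    ∀ u v : V, u ≠ v → ¬ G.Adj u v → ¬ Planar (AddEdge G u v)

/-- Completely apex: every vertex-deleted subgraph is planar. -/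
def CompletelyApex {V : Type} (G : SimpleGraph V) : Prop :=
  ∀ v : V, Planar (DeleteVert G v)

/-- Incompletely apex. -/
def IA {V : Type} (G : SimpleGraph V) : Prop :=
  ∃ v : V, ¬ Planar (DeleteVert G v)

/-- Incompletely edge apex. -/
def IE {V : Type} (G : SimpleGraph V) : Prop :=
  ∃ e ∈ G.edgeSet, ¬ Planar (G.deleteEdges {e})

/-- Incompletely contraction apex. -/
def IC {V : Type} (G : SimpleGraph V) : Prop :=
  ∃ u v : V, G.Adj u v ∧ ¬ Planar (ContractEdge G u v)

/-- Not apex. -/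
def NA {V : Type} (G : SimpleGraph V) : Prop :=
  ∀ v : V, ¬ Planar (DeleteVert G v)

/-- Not edge apex. -/
def NE {V : Type} (G : SimpleGraph V) : Prop :=
  ∀ e ∈ G.edgeSet, ¬ Planar (G.deleteEdges {e})

/-- Edge apex: some edge deletion (or the graph itself) is planar. -/
def EdgeApex {V : Type} (G : SimpleGraph V) : Prop :=
  Planar G ∨ ∃ e ∈ G.edgeSet, Planar (G.deleteEdges {e})

/-!
If `G - v` is nonplanar, it has a minor `K ∈ {K₅, K₃,₃}`, and taking `{v}` as one more
branch set shows that `K₁ ⊔ K` is a minor of `G`. Since `K₁ ⊔ K` is itself incompletely apex,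
minimality forces `G` to be a minor of `K₁ ⊔ K` as well. Finite graphs that are minors of
each other are isomorphic: equal vertex counts make all branch sets singletons, so both
models are bijective homomorphisms, and comparing edge counts shows they reflect adjacency.
-/

open Function

variable {α V W : Type}

lemma disjUnion_eq_sum (G : SimpleGraph α) (H : SimpleGraph W) : DisjUnion G H = G ⊕g H := by
  ext (a | a) (b | b) <;> simp [DisjUnion, map_adj'] <;> exact Adj.ne

lemma SimpleGraph.Connected.induce_val_image {G : SimpleGraph V} {T : Set V} {s : Set T}
    (h : ((G.induce T).induce s).Connected) : (G.induce (Subtype.val '' s)).Connected :=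
  h.map ⟨fun x => ⟨x.1.1, x.1, x.2, rfl⟩, fun hxy => hxy⟩
    (by rintro ⟨_, x, hx, rfl⟩; exact ⟨⟨x, hx⟩, rfl⟩)

lemma exists_injective_forall_mem {f : W → Set V} (hne : ∀ w, (f w).Nonempty)
    (hdisj : Pairwise (Disjoint on f)) : ∃ r : W → V, Injective r ∧ ∀ w, r w ∈ f w := by
  choose r hr using hne
  exact ⟨r, fun a b hab => hdisj.eq (Set.not_disjoint_iff.mpr ⟨r a, hr a, hab ▸ hr b⟩), hr⟩

lemma IsMinor.of_injective_hom {H : SimpleGraph W} {G : SimpleGraph V} (f : H →g G)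
    (hf : Injective f) : IsMinor H G := by
  refine ⟨fun w => {f w}, fun w => Set.singleton_nonempty _, fun w => ?_,
    fun a b hab => Set.disjoint_singleton.mpr (hf.ne hab),
    fun a b hab => ⟨f a, rfl, f b, rfl, f.map_adj hab⟩⟩
  rw [induce_singleton_eq_top]
  exact connected_top

lemma IsMinor.disjUnion_bot_of_deleteVert [Subsingleton α] {H : SimpleGraph W}
    {G : SimpleGraph V} {v : V} (h : IsMinor H (DeleteVert G v)) :
    IsMinor (DisjUnion (⊥ : SimpleGraph α) H) G := by
  obtain ⟨f, hne, hconn, hdisj, hadj⟩ := h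
  have hv : ∀ w, v ∉ Subtype.val '' f w := fun w ⟨x, _, hx⟩ => x.2 hx
  refine ⟨Sum.elim (fun _ => {v}) (fun w => Subtype.val '' f w), ?_, ?_, ?_, ?_⟩
  · rintro (a | w)
    · exact Set.singleton_nonempty v
    · exact (hne w).image _
  · rintro (a | w)
    · simp only [Sum.elim_inl, induce_singleton_eq_top]
      exact connected_top
    · exact (hconn w).induce_val_image
  · rintro (a | w) (b | w') hab
    · exact absurd (congrArg Sum.inl (Subsingleton.elim a b)) hab
    · exact Set.disjoint_singleton_left.mpr (hv w')
    · exact Set.disjoint_singleton_right.mpr (hv w)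
    · exact (Set.disjoint_image_iff Subtype.val_injective).mpr
        (hdisj (ne_of_apply_ne Sum.inr hab))
  · rintro (a | w) (b | w') hab <;> simp only [disjUnion_eq_sum, sum_adj, bot_adj] at hab
    obtain ⟨x, hx, y, hy, hxy⟩ := hadj w w' hab
    exact ⟨x, ⟨x, hx, rfl⟩, y, ⟨y, hy, rfl⟩, hxy⟩

lemma isMinor_deleteVert_disjUnion (K : SimpleGraph α) (H : SimpleGraph W) (a : α) :
    IsMinor H (DeleteVert (DisjUnion K H) (.inl a)) :=
  .of_injective_hom ⟨fun w => ⟨.inr w, Sum.inr_ne_inl⟩, by simp [DeleteVert, disjUnion_eq_sum]⟩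
    fun _ _ h => Sum.inr_injective (congrArg Subtype.val h)

lemma IsMinor.exists_injective {H : SimpleGraph W} {G : SimpleGraph V} (h : IsMinor H G) :
    ∃ r : W → V, Injective r :=
  let ⟨_, hne, _, hdisj, _⟩ := h
  (exists_injective_forall_mem hne hdisj).imp fun _ => And.left

lemma IsMinor.exists_bijective_hom [Finite V] {H : SimpleGraph W} {G : SimpleGraph V}
    (h : IsMinor H G) (hcard : Nat.card V ≤ Nat.card W) : ∃ r : H →g G, Bijective r := by
  obtain ⟨f, hne, -, hdisj, hadj⟩ := h
  obtain ⟨r, hinj, hr⟩ := exists_injective_forall_mem hne hdisj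
  have hbij : Bijective r := hinj.bijective_of_nat_card_le hcard
  have hsingleton : ∀ w, ∀ x ∈ f w, x = r w := by
    intro w x hx
    obtain ⟨w', rfl⟩ := hbij.2 x
    rw [hdisj.eq (Set.not_disjoint_iff.mpr ⟨r w', hr w', hx⟩)]
  refine ⟨⟨r, fun {a b} hab => ?_⟩, hbij⟩
  obtain ⟨x, hx, y, hy, hxy⟩ := hadj a b hab
  rwa [hsingleton a x hx, hsingleton b y hy] at hxy

lemma SimpleGraph.Hom.map_adj_iff_of_injective [Finite V] [Finite W] {G : SimpleGraph V}
    {H : SimpleGraph W} (s : G →g H) (hs : Injective s) (r : H →g G) (hr : Injective r)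
    {a b : V} : H.Adj (s a) (s b) ↔ G.Adj a b := by
  have hcard : Nat.card H.edgeSet ≤ Nat.card G.edgeSet :=
    Nat.card_le_card_of_injective _ (Hom.mapEdgeSet.injective r hr)
  have hsurj := ((Hom.mapEdgeSet.injective s hs).bijective_of_nat_card_le hcard).2
  refine ⟨fun hab => ?_, s.map_adj⟩
  obtain ⟨⟨e, he⟩, hse⟩ := hsurj ⟨s(s a, s b), hab⟩
  have : e = s(a, b) := Sym2.map.injective hs (congrArg Subtype.val hse)
  rwa [this] at he

lemma IsMinor.nonempty_iso_of_isMinor [Finite V] {H : SimpleGraph W} {G : SimpleGraph V}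
    (h₁ : IsMinor H G) (h₂ : IsMinor G H) : Nonempty (G ≃g H) := by
  obtain ⟨r, hr⟩ := h₁.exists_injective
  obtain ⟨g, hg⟩ := h₂.exists_injective
  have : Finite W := Finite.of_injective r hr
  obtain ⟨s, hs⟩ := h₂.exists_bijective_hom (Nat.card_le_card_of_injective r hr)
  obtain ⟨r', hr'⟩ := h₁.exists_bijective_hom (Nat.card_le_card_of_injective g hg)
  exact ⟨⟨Equiv.ofBijective s hs, s.map_adj_iff_of_injective hs.1 r' hr'.1⟩⟩

lemma MinorMinimal.nonempty_iso_of_isMinor {P : {V : Type} → SimpleGraph V → Prop} [Finite V]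
    {G : SimpleGraph V} (hG : MinorMinimal P G) {H : SimpleGraph W} (hH : P H)
    (h : IsMinor H G) : Nonempty (G ≃g H) :=
  h.nonempty_iso_of_isMinor (not_not.mp fun h' => hG.2 W H ⟨h, h'⟩ hH)

theorem stmt_5_general {V : Type} [Fintype V] (G : SimpleGraph V)
    (hmm : MinorMinimal (fun {_} H => IA H) G) :
    Nonempty (G ≃g DisjUnion (⊥ : SimpleGraph (Fin 1)) K5) ∨
    Nonempty (G ≃g DisjUnion (⊥ : SimpleGraph (Fin 1)) K33) := by
  obtain ⟨v, hv⟩ := hmm.1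
  have hiso : ∀ {W : Type} (K : SimpleGraph W),
      ¬ Planar (DeleteVert (DisjUnion (⊥ : SimpleGraph (Fin 1)) K) (.inl 0)) →
      IsMinor K (DeleteVert G v) → Nonempty (G ≃g DisjUnion (⊥ : SimpleGraph (Fin 1)) K) :=
    fun _ hK h => hmm.nonempty_iso_of_isMinor ⟨.inl 0, hK⟩ h.disjUnion_bot_of_deleteVert
  rcases not_and_or.mp hv with h5 | h33
  · exact .inl <| hiso K5 (fun hp => hp.1 (isMinor_deleteVert_disjUnion ⊥ K5 0)) (not_not.mp h5)
  · exact .inr <| hiso K33 (fun hp => hp.2 (isMinor_deleteVert_disjUnion ⊥ K33 0)) (not_not.mp h33)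

/-- A disconnected minor minimal incompletely apex graph is `K₁ ⊔ K₅` or `K₁ ⊔ K₃,₃`. -/
theorem stmt_5 {V : Type} [Fintype V] (G : SimpleGraph V)
    (hdisc : ¬ G.Connected) (hmm : MinorMinimal (fun {_} H => IA H) G) :
    Nonempty (G ≃g DisjUnion (⊥ : SimpleGraph (Fin 1)) K5) ∨
    Nonempty (G ≃g DisjUnion (⊥ : SimpleGraph (Fin 1)) K33) :=
  stmt_5_general G hmm
end

section
/- Let G be a minor minimal not-apex graph of connectivity 2 with 2-cut {a, b} and G - a, b = G_1 ⊔ G_2. Then G_1 and G_2 are not both nonplanar. -/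
open SimpleGraph

/-!
By minimality `G - a` is apex, say with apex `w`. The vertex `w` lies in at most one of the
disjoint sides `S1`, `S2`, and the other side induces a subgraph of the planar graph `G - a - w`.
-/

lemma IsMinor.trans_isContained {W A B : Type} {K : SimpleGraph W} {GA : SimpleGraph A}
    {GB : SimpleGraph B} (h : IsMinor K GA) (hAB : GA ⊑ GB) : IsMinor K GB := by
  obtain ⟨f, hne, hconn, hdisj, hedge⟩ := h
  obtain ⟨φ⟩ := hAB
  refine ⟨fun w => φ '' f w, fun w => (hne w).image φ, fun w => ?_,
    fun w₁ w₂ hw => Set.disjoint_image_of_injective φ.injective (hdisj hw), fun w₁ w₂ hw => ?_⟩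
  · let ψ : GA.induce (f w) →g GB.induce (φ '' f w) :=
      ⟨fun x => ⟨φ x, x, x.2, rfl⟩, fun hxy => φ.toHom.map_adj hxy⟩
    refine (hconn w).map ψ ?_
    rintro ⟨_, x, hx, rfl⟩
    exact ⟨⟨x, hx⟩, rfl⟩
  · obtain ⟨x, hx, y, hy, hxy⟩ := hedge w₁ w₂ hw
    exact ⟨φ x, ⟨x, hx, rfl⟩, φ y, ⟨y, hy, rfl⟩, φ.toHom.map_adj hxy⟩

lemma Planar.of_isContained {A B : Type} {GA : SimpleGraph A} {GB : SimpleGraph B}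
    (hAB : GA ⊑ GB) (h : Planar GB) : Planar GA :=
  ⟨fun hK => h.1 (hK.trans_isContained hAB), fun hK => h.2 (hK.trans_isContained hAB)⟩

lemma SimpleGraph.IsContained.isMinor {A B : Type} {GA : SimpleGraph A} {GB : SimpleGraph B}
    (hAB : GA ⊑ GB) : IsMinor GA GB := by
  obtain ⟨φ⟩ := hAB
  refine ⟨fun x => {φ x}, fun x => Set.singleton_nonempty _, fun x => ?_, fun x y hxy => ?_,
    fun x y hxy => ⟨φ x, rfl, φ y, rfl, φ.toHom.map_adj hxy⟩⟩
  · have : Subsingleton ({φ x} : Set B) := Set.subsingleton_singleton.coe_sort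
    have : Nonempty ({φ x} : Set B) := ⟨⟨φ x, rfl⟩⟩
    exact ⟨fun u v => Subsingleton.elim u v ▸ Reachable.refl u⟩
  · exact Set.disjoint_singleton.mpr (φ.injective.ne hxy)

/-- Picking one vertex from each branch set is injective, since branch sets are disjoint. -/
lemma IsMinor.card_le {W V : Type} [Finite V] {H : SimpleGraph W} {G : SimpleGraph V}
    (h : IsMinor H G) : Nat.card W ≤ Nat.card V := by
  obtain ⟨f, hne, -, hdisj, -⟩ := h
  choose g hg using hne
  refine Nat.card_le_card_of_injective g fun w₁ w₂ hw => ?_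
  by_contra hne'
  exact Set.disjoint_left.mp (hdisj hne') (hg w₁) (hw ▸ hg w₂)

lemma deleteVert_properMinor {V : Type} [Finite V] (G : SimpleGraph V) (a : V) :
    ProperMinor (DeleteVert G a) G :=
  ⟨(Copy.induce G _).isContained.isMinor, fun h =>
    (Finite.card_subtype_lt (p := (· ≠ a)) (not_not.mpr rfl)).not_ge h.card_le⟩

lemma induce_isContained_deleteVert_deleteVert {V : Type} (G : SimpleGraph V) {a : V}
    (w : {u : V // u ≠ a}) {S : Set V} (haS : a ∉ S) (hwS : w.1 ∉ S) :
    G.induce S ⊑ DeleteVert (DeleteVert G a) w := by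
  refine ⟨Hom.toCopy ⟨fun v => ⟨⟨v, ?_⟩, ?_⟩, id⟩ fun x y hxy => ?_⟩
  · exact ne_of_mem_of_not_mem v.2 haS
  · exact fun h => hwS (congrArg Subtype.val h ▸ v.2)
  · exact Subtype.ext (congrArg (fun z : {u // _} => z.1.1) hxy)

lemma MinorMinimal.exists_planar_induce {V : Type} [Finite V] {G : SimpleGraph V}
    (hmm : MinorMinimal (fun {_} H => NA H) G) (a : V) :
    ∃ w : V, ∀ S : Set V, a ∉ S → w ∉ S → Planar (G.induce S) := by
  have hapex := hmm.2 _ _ (deleteVert_properMinor G a)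
  simp only [NA, not_forall, not_not] at hapex
  obtain ⟨w, hw⟩ := hapex
  exact ⟨w, fun S haS hwS =>
    hw.of_isContained (induce_isContained_deleteVert_deleteVert G w haS hwS)⟩

theorem stmt_14_general {V : Type} [Fintype V] (G : SimpleGraph V)
    (hmm : MinorMinimal (fun {_} H => NA H) G)
    (a b : V) (S1 S2 : Set V)
    (hpart : S1 ∪ S2 = {v | v ≠ a ∧ v ≠ b}) (hdisj : Disjoint S1 S2) :
    ¬ (¬ Planar (G.induce S1) ∧ ¬ Planar (G.induce S2)) := by
  rintro ⟨hS1, hS2⟩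
  have ha : ∀ S ⊆ S1 ∪ S2, a ∉ S := fun S hS haS => (hpart ▸ hS haS).1 rfl
  obtain ⟨w, hw⟩ := hmm.exists_planar_induce a
  by_cases hw1 : w ∈ S1
  · exact hS2 (hw S2 (ha S2 Set.subset_union_right) (Set.disjoint_left.mp hdisj hw1))
  · exact hS1 (hw S1 (ha S1 Set.subset_union_left) hw1)

/-- For a minor minimal not-apex graph of connectivity two with `2`-cut `{a, b}`
and `G - a,b = G₁ ⊔ G₂`, the components `G₁` and `G₂` are not both nonplanar. -/
theorem stmt_14 {V : Type} [Fintype V] (G : SimpleGraph V)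
    (hmm : MinorMinimal (fun {_} H => NA H) G)
    (hconn : VertexConnAtLeast G 2 ∧ ¬ VertexConnAtLeast G 3)
    (a b : V) (hab : a ≠ b) (S1 S2 : Set V)
    (hpart : S1 ∪ S2 = {v | v ≠ a ∧ v ≠ b}) (hdisj : Disjoint S1 S2)
    (h1 : S1.Nonempty) (h2 : S2.Nonempty)
    (hsep : ∀ x ∈ S1, ∀ y ∈ S2, ¬ G.Adj x y) :
    ¬ (¬ Planar (G.induce S1) ∧ ¬ Planar (G.induce S2)) :=
  stmt_14_general G hmm a b S1 S2 hpart hdisj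
end
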